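/- Let d ≥ 2 and let v ∈ ℂ^d with ‖v‖₂ = 1. If G(v) is (α,β)-biangular, then β - α = (1 - (d+1)α)/d. Consequently, β > α if and only if α < 1/(d+1), and β < α if and only if α > 1/(d+1). -/

import Mathlib

open scoped ComplexConjugate

/-- The translation operator `T` on `ℂ^d = (ZMod d → ℂ)`: `(T v) j = v (j - 1)`. -/
noncomputable def gT (d : ℕ) : (ZMod d → ℂ) ≃ₗ[ℂ] (ZMod d → ℂ) :=
  LinearEquiv.funCongrLeft ℂ ℂ (Equiv.subRight (1 : ZMod d))

/-- The modulation operator `M` on `ℂ^d`: `(M v) j = ω ^ j * v j` with `ω = exp (2 π i / d)`. -/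
noncomputable def gM (d : ℕ) : (ZMod d → ℂ) ≃ₗ[ℂ] (ZMod d → ℂ) :=
  LinearEquiv.piCongrRight fun j =>
    LinearEquiv.smulOfNeZero ℂ ℂ (Complex.exp (2 * Real.pi * Complex.I / d) ^ j.val)
      (pow_ne_zero _ (Complex.exp_ne_zero _))

/-- The standard inner product on `ℂ^d`, conjugate-linear in the first argument. -/
noncomputable def inn {d : ℕ} [NeZero d] (u w : ZMod d → ℂ) : ℂ :=
  ∑ j : ZMod d, conj (u j) * w j

/-- The Gabor system `G(v) = {M^ℓ T^k v}` is `(α, β)`-biangular: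
`|⟨v, T^k v⟩|² = α` for `k ∈ {1,…,d-1}` and `|⟨v, M^ℓ T^k v⟩|² = β` for
`k ∈ {0,…,d-1}`, `ℓ ∈ {1,…,d-1}`. -/
def Biangular (d : ℕ) [NeZero d] (v : ZMod d → ℂ) (α β : ℝ) : Prop :=
  (∀ k : ℕ, 1 ≤ k → k ≤ d - 1 → ‖inn v ((gT d ^ k) v)‖ ^ 2 = α) ∧
  (∀ k ℓ : ℕ, k ≤ d - 1 → 1 ≤ ℓ → ℓ ≤ d - 1 →
    ‖inn v ((gM d ^ ℓ) ((gT d ^ k) v))‖ ^ 2 = β)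

/-- `B_d`: the set of nonzero `v ∈ ℂ^d` whose Gabor system is biangular. -/
def Bset (d : ℕ) [NeZero d] : Set (ZMod d → ℂ) :=
  {v | v ≠ 0 ∧ ∃ α β : ℝ, Biangular d v α β}

/-!
For fixed `k`, the correlations `⟨v, M^ℓ T^k v⟩`, `0 ≤ ℓ < d`, are the discrete Fourier coefficients
of `j ↦ conj (v j) * v (j - k)`, so by Parseval their squared moduli sum to
`d ∑ⱼ |v j|² |v (j - k)|²`; summing over `k` shows that the squared correlations of `v` with the
whole Gabor system add up to `d ‖v‖⁴`. For a unit vector whose Gabor system is `(α, β)`-biangular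
the same sum is `1 + (d - 1) α + d (d - 1) β`; cancelling `d - 1 ≠ 0` gives `α + d β = 1`.
-/

open Finset

lemma sum_range_pow_of_pow_eq_one {K : Type*} [Field K] [DecidableEq K] {η : K} {d : ℕ}
    (hη : η ^ d = 1) : ∑ ℓ ∈ range d, η ^ ℓ = if η = 1 then (d : K) else 0 := by
  split_ifs with h
  · simp [h]
  · rw [geom_sum_eq h, hη, sub_self, zero_div]

lemma IsPrimitiveRoot.sum_pow_mul_conj_pow {ζ : ℂ} {d : ℕ} [NeZero d] (hζ : IsPrimitiveRoot ζ d)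
    (i j : ZMod d) :
    ∑ ℓ ∈ range d, (ζ ^ i.val) ^ ℓ * conj ((ζ ^ j.val) ^ ℓ) = if i = j then (d : ℂ) else 0 := by
  have hζj : ζ ^ j.val ≠ 0 := pow_ne_zero _ (hζ.ne_zero (NeZero.ne d))
  have hconj : conj (ζ ^ j.val) = (ζ ^ j.val)⁻¹ :=
    (Complex.inv_eq_conj (by rw [norm_pow, hζ.norm'_eq_one (NeZero.ne d), one_pow])).symm
  have hterm (ℓ : ℕ) : (ζ ^ i.val) ^ ℓ * conj ((ζ ^ j.val) ^ ℓ) = (ζ ^ i.val / ζ ^ j.val) ^ ℓ := by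
    rw [map_pow, hconj, div_pow, div_eq_mul_inv, inv_pow]
  have hratio : ζ ^ i.val / ζ ^ j.val = 1 ↔ i = j := by
    rw [div_eq_one_iff_eq hζj]
    exact ⟨fun h => ZMod.val_injective d (hζ.pow_inj (ZMod.val_lt i) (ZMod.val_lt j) h),
      fun h => h ▸ rfl⟩
  have hpow : (ζ ^ i.val / ζ ^ j.val) ^ d = 1 := by
    rw [div_pow, ← pow_mul, ← pow_mul, pow_mul', pow_mul' ζ, hζ.pow_eq_one, one_pow, one_pow,
      div_one]
  simp_rw [hterm]
  rw [sum_range_pow_of_pow_eq_one hpow]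
  exact if_congr hratio rfl rfl

lemma IsPrimitiveRoot.sum_norm_sq_sum_mul_pow {ζ : ℂ} {d : ℕ} [NeZero d]
    (hζ : IsPrimitiveRoot ζ d) (f : ZMod d → ℂ) :
    ∑ ℓ ∈ range d, ‖∑ j, f j * (ζ ^ j.val) ^ ℓ‖ ^ 2 = d * ∑ j, ‖f j‖ ^ 2 := by
  apply Complex.ofReal_injective
  push_cast
  calc ∑ ℓ ∈ range d, ((‖∑ j, f j * (ζ ^ j.val) ^ ℓ‖ : ℂ)) ^ 2
      = ∑ i, ∑ j, f i * conj (f j) *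
          ∑ ℓ ∈ range d, (ζ ^ i.val) ^ ℓ * conj ((ζ ^ j.val) ^ ℓ) := by
        simp_rw [← Complex.mul_conj', map_sum, sum_mul_sum, mul_sum, map_mul]
        rw [sum_comm]
        refine sum_congr rfl fun i _ => ?_
        rw [sum_comm]
        refine sum_congr rfl fun j _ => sum_congr rfl fun ℓ _ => by ring
    _ = d * ∑ j, (‖f j‖ : ℂ) ^ 2 := by
        simp_rw [hζ.sum_pow_mul_conj_pow, mul_ite, mul_zero, sum_ite_eq, mem_univ, if_true,
          Complex.mul_conj', mul_sum, mul_comm]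

lemma Finset.sum_range_eq_add_mul_of_forall {R : Type*} [Ring R] {d : ℕ} (hd : d ≠ 0)
    {f : ℕ → R} {c : R} (h : ∀ k, 1 ≤ k → k ≤ d - 1 → f k = c) :
    ∑ k ∈ range d, f k = f 0 + ((d : R) - 1) * c := by
  obtain ⟨n, rfl⟩ := Nat.exists_eq_succ_of_ne_zero hd
  rw [sum_range_succ', add_comm, sum_congr rfl fun k hk => h (k + 1) (by omega)
    (by simp at hk; omega)]
  simp

lemma ZMod.sum_range_natCast {M : Type*} [AddCommMonoid M] (d : ℕ) [NeZero d] (g : ZMod d → M) :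
    ∑ k ∈ range d, g k = ∑ x, g x := by
  refine sum_nbij' (↑) ZMod.val (by simp) (fun x _ => mem_range.2 x.val_lt)
    (fun k hk => ZMod.val_cast_of_lt (mem_range.1 hk)) (fun x _ => ZMod.natCast_zmod_val x)
    fun _ _ => rfl

section Gabor

variable {d : ℕ}

lemma gT_pow_apply (k : ℕ) (v : ZMod d → ℂ) (j : ZMod d) : (gT d ^ k) v j = v (j - k) := by
  induction k generalizing j with
  | zero => simp
  | succ n ih =>
    rw [pow_succ', LinearEquiv.mul_apply]
    change (gT d ^ n) v (j - 1) = _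
    rw [ih]
    push_cast
    ring_nf

lemma gM_pow_apply (ℓ : ℕ) (v : ZMod d → ℂ) (j : ZMod d) :
    (gM d ^ ℓ) v j = (Complex.exp (2 * Real.pi * Complex.I / d) ^ j.val) ^ ℓ * v j := by
  induction ℓ with
  | zero => simp
  | succ n ih =>
    rw [pow_succ', LinearEquiv.mul_apply]
    change Complex.exp (2 * Real.pi * Complex.I / d) ^ j.val * (gM d ^ n) v j = _
    rw [ih]
    ring

variable [NeZero d]

lemma inn_gM_pow_gT_pow (v : ZMod d → ℂ) (k ℓ : ℕ) :
    inn v ((gM d ^ ℓ) ((gT d ^ k) v)) =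
      ∑ j, conj (v j) * v (j - k) * (Complex.exp (2 * Real.pi * Complex.I / d) ^ j.val) ^ ℓ := by
  refine sum_congr rfl fun j _ => ?_
  rw [gM_pow_apply, gT_pow_apply]
  ring

lemma norm_inn_self (v : ZMod d → ℂ) : ‖inn v v‖ = ∑ j, ‖v j‖ ^ 2 := by
  have : inn v v = ((∑ j, ‖v j‖ ^ 2 : ℝ) : ℂ) := by
    push_cast
    exact sum_congr rfl fun j _ => Complex.conj_mul' (v j)
  rw [this, Complex.norm_of_nonneg (by positivity)]

theorem sum_norm_sq_inn_gabor (v : ZMod d → ℂ) :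
    ∑ k ∈ range d, ∑ ℓ ∈ range d, ‖inn v ((gM d ^ ℓ) ((gT d ^ k) v))‖ ^ 2 =
      d * (∑ j, ‖v j‖ ^ 2) ^ 2 := by
  simp_rw [inn_gM_pow_gT_pow,
    (Complex.isPrimitiveRoot_exp d (NeZero.ne d)).sum_norm_sq_sum_mul_pow, norm_mul,
    Complex.norm_conj, mul_pow, ← mul_sum]
  congr 1
  rw [sum_comm, sq, sum_mul]
  refine sum_congr rfl fun j _ => ?_
  rw [← mul_sum, ZMod.sum_range_natCast d fun x => ‖v (j - x)‖ ^ 2]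
  exact congrArg _ (Fintype.sum_equiv (Equiv.subLeft j) _ _ fun _ => rfl)

theorem Biangular.sum_norm_sq_inn_gabor {v : ZMod d → ℂ} {α β : ℝ} (h : Biangular d v α β) :
    ∑ k ∈ range d, ∑ ℓ ∈ range d, ‖inn v ((gM d ^ ℓ) ((gT d ^ k) v))‖ ^ 2 =
      (∑ j, ‖v j‖ ^ 2) ^ 2 + (d - 1) * α + d * ((d - 1) * β) := by
  have hd := NeZero.ne d
  rw [sum_congr rfl fun k hk => sum_range_eq_add_mul_of_forall hd fun ℓ h₁ h₂ =>
    h.2 k ℓ (by simp at hk; omega) h₁ h₂, sum_add_distrib, sum_const, card_range, nsmul_eq_mul]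
  simp only [pow_zero, LinearEquiv.coe_one, id]
  rw [sum_range_eq_add_mul_of_forall hd h.1, pow_zero, LinearEquiv.coe_one, id, norm_inn_self]

theorem Biangular.add_mul_eq_one (hd : 2 ≤ d) {v : ZMod d → ℂ} (hv : ∑ j, ‖v j‖ ^ 2 = 1)
    {α β : ℝ} (h : Biangular d v α β) : α + d * β = 1 := by
  have htotal := (_root_.sum_norm_sq_inn_gabor v).symm.trans h.sum_norm_sq_inn_gabor
  rw [hv] at htotal
  have hd1 : (d : ℝ) - 1 ≠ 0 := by
    rw [sub_ne_zero]; exact_mod_cast (by omega : d ≠ 1)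
  apply mul_left_cancel₀ hd1
  linear_combination -htotal

end Gabor

/-- for unit-norm `v` with `G(v)` `(α, β)`-biangular,
`β - α = (1 - (d + 1) α) / d`; consequently `α < β ↔ α < 1/(d+1)` and
`β < α ↔ 1/(d+1) < α`. -/
theorem biangular_angle_gap (d : ℕ) [NeZero d] (hd : 2 ≤ d) (v : ZMod d → ℂ)
    (hv : ∑ j, ‖v j‖ ^ 2 = 1) (α β : ℝ) (h : Biangular d v α β) :
    β - α = (1 - (d + 1) * α) / d ∧ (α < β ↔ α < 1 / (d + 1)) ∧
      (β < α ↔ 1 / (d + 1) < α) := by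
  have hd₀ : (0 : ℝ) < d := by positivity
  have hβ : β = (1 - α) / d := by
    rw [eq_div_iff hd₀.ne']; linear_combination h.add_mul_eq_one hd hv
  have hd₁ : (0 : ℝ) < d + 1 := by positivity
  refine ⟨by rw [hβ]; field_simp; ring, ?_, ?_⟩
  · rw [hβ, lt_div_iff₀ hd₀, lt_div_iff₀ hd₁]
    constructor <;> intro <;> linarith
  · rw [hβ, div_lt_iff₀ hd₀, div_lt_iff₀ hd₁]
    constructor <;> intro <;> linarith
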